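/- Let P and Q be real symmetric d × d matrices such that the smallest eigenvalue of P satisfies λ_min(P) ≥ ‖Q‖. Then P and P + Q are positive semi-definite and ‖√(P+Q) − √P‖ ≤ √‖Q‖, where √M denotes the positive semi-definite square root and ‖·‖ the operator norm. -/

import Mathlib

/-!
Put `A = √(P + Q)` and `B = √P`, and let `v` be a unit eigenvector of the symmetric matrix
`A - B`, with eigenvalue `μ`. Since `A² - B² = A (A - B) + (A - B) B`,
`⟪v, Q v⟫ = μ (⟪v, A v⟫ + ⟪v, B v⟫)`, and as `⟪v, A v⟫ - ⟪v, B v⟫ = μ` with both terms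
nonnegative, the bracket is at least `|μ|`. Hence `μ² ≤ ‖Q‖` for every eigenvalue, and the norm
of a symmetric operator is the largest absolute value of its eigenvalues.
-/

open Matrix

section
open scoped ComplexOrder

/-- The positive semidefinite square root of a positive semidefinite matrix
(the definition of `Matrix.PosSemidef.sqrt` in the older Mathlib, since removed). -/
noncomputable def Matrix.PosSemidef.sqrt {n 𝕜 : Type*} [Fintype n] [DecidableEq n] [RCLike 𝕜]
    {A : Matrix n n 𝕜} (hA : A.PosSemidef) : Matrix n n 𝕜 :=
  hA.1.eigenvectorUnitary.1 * diagonal ((↑) ∘ (√·) ∘ hA.1.eigenvalues) *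
  (star hA.1.eigenvectorUnitary : Matrix n n 𝕜)

end

/-- Operator (spectral) norm of a real square matrix, via its action on Euclidean space. -/
noncomputable def opNorm {d : ℕ} (M : Matrix (Fin d) (Fin d) ℝ) : ℝ :=
  ‖Matrix.toEuclideanCLM (𝕜 := ℝ) M‖

open Module End

namespace ContinuousLinearMap

variable {𝕜 E : Type*} [RCLike 𝕜] [NormedAddCommGroup E] [InnerProductSpace 𝕜 E]

theorem norm_le_of_forall_hasEigenvalue [FiniteDimensional 𝕜 E] {T : E →L[𝕜] E}
    (hT : T.IsSymmetric) {c : ℝ} (hc : 0 ≤ c)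
    (h : ∀ μ : ℝ, HasEigenvalue (T : E →ₗ[𝕜] E) μ → |μ| ≤ c) : ‖T‖ ≤ c := by
  have : CompleteSpace E := FiniteDimensional.complete 𝕜 E
  suffices (‖T‖₊ : ENNReal) ≤ ENNReal.ofReal c by
    rwa [← enorm_eq_nnnorm, ← ofReal_norm, ENNReal.ofReal_le_ofReal_iff hc] at this
  rw [← T.spectralRadius_eq_nnnorm hT.isSelfAdjoint]
  refine iSup₂_le fun k hk => ?_
  rw [spectrum_eq, ← hasEigenvalue_iff_mem_spectrum] at hk
  have hk_re : ((RCLike.re k : ℝ) : 𝕜) = k :=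
    RCLike.conj_eq_iff_re.mp (hT.conj_eigenvalue_eq_self hk)
  rw [← hk_re] at hk ⊢
  rw [← enorm_eq_nnnorm, ← ofReal_norm, RCLike.norm_ofReal]
  exact ENNReal.ofReal_le_ofReal (h _ hk)

theorem abs_re_inner_apply_self_le (X : E →L[𝕜] E) (v : E) :
    |RCLike.re (inner 𝕜 v (X v))| ≤ ‖X‖ * ‖v‖ ^ 2 :=
  calc |RCLike.re (inner 𝕜 v (X v))| ≤ ‖v‖ * ‖X v‖ :=
        (RCLike.abs_re_le_norm _).trans (norm_inner_le_norm _ _)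
    _ ≤ ‖v‖ * (‖X‖ * ‖v‖) := by gcongr; exact X.le_opNorm v
    _ = ‖X‖ * ‖v‖ ^ 2 := by ring

theorem sq_le_norm_mul_self_sub_mul_self_of_hasEigenvalue {S T : E →L[𝕜] E} (hS : S.IsPositive)
    (hT : T.IsPositive) {μ : ℝ} (hμ : HasEigenvalue ((S - T : E →L[𝕜] E) : E →ₗ[𝕜] E) μ) :
    μ ^ 2 ≤ ‖S * S - T * T‖ := by
  obtain ⟨v, hv, hv0⟩ := hμ.exists_hasEigenvector
  rw [mem_eigenspace_iff] at hv
  change (S - T) v = (μ : 𝕜) • v at hv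
  set qS := RCLike.re (inner 𝕜 v (S v))
  set qT := RCLike.re (inner 𝕜 v (T v))
  have hqS : 0 ≤ qS := hS.re_inner_nonneg_right v
  have hqT : 0 ≤ qT := hT.re_inner_nonneg_right v
  have hv2 : 0 < ‖v‖ ^ 2 := by positivity
  have hdiff : qS - qT = μ * ‖v‖ ^ 2 := by
    have := congrArg (fun w => RCLike.re (inner 𝕜 v w)) hv
    simpa [inner_sub_right, inner_smul_right, inner_self_eq_norm_sq_to_K] using this
  have hsum : RCLike.re (inner 𝕜 v ((S * S - T * T) v)) = μ * (qS + qT) := by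
    have hsymm : inner 𝕜 ((S - T) v) (T v) = inner 𝕜 v ((S - T) (T v)) :=
      (hS.isSymmetric.sub hT.isSymmetric) v (T v)
    have hsplit : (S * S - T * T) v = S ((S - T) v) + (S - T) (T v) := by simp
    rw [hsplit, inner_add_right, ← hsymm, hv, map_smul, inner_smul_right, inner_smul_left,
      RCLike.conj_ofReal, ← mul_add, RCLike.re_ofReal_mul, map_add]
  have habs : |μ| * ‖v‖ ^ 2 ≤ qS + qT :=
    calc |μ| * ‖v‖ ^ 2 = |qS - qT| := by rw [hdiff, abs_mul, abs_of_pos hv2]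
      _ ≤ qS + qT := abs_sub_le_iff.mpr ⟨by linarith, by linarith⟩
  have key : μ ^ 2 * ‖v‖ ^ 2 ≤ ‖S * S - T * T‖ * ‖v‖ ^ 2 :=
    calc μ ^ 2 * ‖v‖ ^ 2 = |μ| * (|μ| * ‖v‖ ^ 2) := by rw [← sq_abs]; ring
      _ ≤ |μ| * (qS + qT) := mul_le_mul_of_nonneg_left habs (abs_nonneg μ)
      _ = |RCLike.re (inner 𝕜 v ((S * S - T * T) v))| := by
        rw [hsum, abs_mul, abs_of_nonneg (add_nonneg hqS hqT)]
      _ ≤ ‖S * S - T * T‖ * ‖v‖ ^ 2 := abs_re_inner_apply_self_le _ v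
  exact le_of_mul_le_mul_right key hv2

theorem norm_sub_le_sqrt_norm_mul_self_sub [FiniteDimensional 𝕜 E] {S T : E →L[𝕜] E}
    (hS : S.IsPositive) (hT : T.IsPositive) : ‖S - T‖ ≤ √‖S * S - T * T‖ :=
  norm_le_of_forall_hasEigenvalue (hS.isSymmetric.sub hT.isSymmetric) (Real.sqrt_nonneg _)
    fun _ hμ => Real.abs_le_sqrt (sq_le_norm_mul_self_sub_mul_self_of_hasEigenvalue hS hT hμ)

end ContinuousLinearMap

namespace Matrix

open scoped ComplexOrder

variable {n 𝕜 : Type*} [Fintype n] [DecidableEq n] [RCLike 𝕜]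

theorem PosSemidef.isPositive_toEuclideanCLM {A : Matrix n n 𝕜} (hA : A.PosSemidef) :
    (toEuclideanCLM (n := n) (𝕜 := 𝕜) A).IsPositive := by
  rw [← ContinuousLinearMap.isPositive_toLinearMap_iff]
  exact isPositive_toEuclideanLin_iff.mpr hA

theorem abs_le_norm_toEuclideanCLM_of_mem_spectrum {A : Matrix n n 𝕜} {k : ℝ}
    (hk : k ∈ spectrum ℝ A) : |k| ≤ ‖toEuclideanCLM (n := n) (𝕜 := 𝕜) A‖ := by
  rw [← spectrum.algebraMap_mem_iff 𝕜,
    ← AlgEquiv.spectrum_eq (toEuclideanCLM (n := n) (𝕜 := 𝕜)).toAlgEquiv A] at hk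
  simpa using (spectrum.norm_le_norm_mul_of_mem hk).trans
    (mul_le_of_le_one_right (norm_nonneg _) ContinuousLinearMap.norm_id_le)

section

open scoped MatrixOrder

theorem PosSemidef.sqrt_eq_cfcSqrt {A : Matrix n n 𝕜} (hA : A.PosSemidef) :
    hA.sqrt = CFC.sqrt A := by
  rw [CFC.sqrt_eq_real_sqrt A hA.nonneg, cfcₙ_eq_cfc, hA.1.cfc_eq]
  simp [IsHermitian.cfc, PosSemidef.sqrt, Unitary.conjStarAlgAut_apply]

theorem PosSemidef.posSemidef_sqrt {A : Matrix n n 𝕜} (hA : A.PosSemidef) :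
    hA.sqrt.PosSemidef := by
  rw [hA.sqrt_eq_cfcSqrt]
  exact nonneg_iff_posSemidef.mp (CFC.sqrt_nonneg A)

theorem PosSemidef.sqrt_mul_self {A : Matrix n n 𝕜} (hA : A.PosSemidef) :
    hA.sqrt * hA.sqrt = A := by
  rw [hA.sqrt_eq_cfcSqrt]
  exact CFC.sqrt_mul_sqrt_self A hA.nonneg

theorem IsHermitian.posSemidef_add_of_norm_le_eigenvalues {A B : Matrix n n 𝕜}
    (hA : A.IsHermitian) (hB : B.IsHermitian)
    (h : ∀ i, ‖toEuclideanCLM (n := n) (𝕜 := 𝕜) B‖ ≤ hA.eigenvalues i) : (A + B).PosSemidef := by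
  set c := ‖toEuclideanCLM (n := n) (𝕜 := 𝕜) B‖
  have hAc : algebraMap ℝ (Matrix n n 𝕜) c ≤ A := by
    rw [algebraMap_le_iff_le_spectrum hA.isSelfAdjoint, hA.spectrum_real_eq_range_eigenvalues]
    rintro _ ⟨i, rfl⟩
    exact h i
  have hBc : algebraMap ℝ (Matrix n n 𝕜) (-c) ≤ B :=
    (algebraMap_le_iff_le_spectrum hB.isSelfAdjoint).mpr fun k hk =>
      neg_le_of_abs_le (abs_le_norm_toEuclideanCLM_of_mem_spectrum hk)
  have hAB := add_le_add hAc hBc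
  rw [← map_add, add_neg_cancel, map_zero] at hAB
  exact nonneg_iff_posSemidef.mp hAB

end

theorem PosSemidef.norm_toEuclideanCLM_sqrt_sub_sqrt_le {A B : Matrix n n 𝕜}
    (hA : A.PosSemidef) (hB : B.PosSemidef) :
    ‖toEuclideanCLM (n := n) (𝕜 := 𝕜) (hA.sqrt - hB.sqrt)‖ ≤
      √‖toEuclideanCLM (n := n) (𝕜 := 𝕜) (A - B)‖ := by
  have := ContinuousLinearMap.norm_sub_le_sqrt_norm_mul_self_sub
    hA.posSemidef_sqrt.isPositive_toEuclideanCLM hB.posSemidef_sqrt.isPositive_toEuclideanCLM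
  rwa [← map_mul, ← map_mul, hA.sqrt_mul_self, hB.sqrt_mul_self, ← map_sub, ← map_sub] at this

end Matrix

/-- If `P`, `Q` are symmetric and the smallest eigenvalue of `P` is at least `‖Q‖`, then
`P` and `P + Q` are positive semi-definite and `‖√(P+Q) − √P‖ ≤ √‖Q‖`. -/
theorem sqrt_gap_of_eigenvalue_bound {d : ℕ} (P Q : Matrix (Fin d) (Fin d) ℝ)
    (hP : P.IsHermitian) (hQsymm : Q.IsSymm)
    (hmin : ∀ i : Fin d, opNorm Q ≤ hP.eigenvalues i) :
    ∃ (hPpsd : P.PosSemidef) (hPQpsd : (P + Q).PosSemidef),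
      opNorm (hPQpsd.sqrt - hPpsd.sqrt) ≤ Real.sqrt (opNorm Q) := by
  have hQ : Q.IsHermitian := (conjTranspose_eq_transpose_of_trivial Q).trans hQsymm
  have hPpsd : P.PosSemidef :=
    hP.posSemidef_iff_eigenvalues_nonneg.mpr fun i => (norm_nonneg _).trans (hmin i)
  have hPQpsd : (P + Q).PosSemidef := hP.posSemidef_add_of_norm_le_eigenvalues hQ hmin
  refine ⟨hPpsd, hPQpsd, ?_⟩
  simpa [opNorm] using hPQpsd.norm_toEuclideanCLM_sqrt_sub_sqrt_le hPpsd
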